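/- arXiv:1506.03433 — 2 statements merged into one kernel-verified Lean document; each statement's English description precedes it below -/
import Mathlib

section
/- Let κ ≤ λ be infinite cardinals, let X be a set of cardinality λ, and let π and ρ represent automorphisms of P(X)/I_κ. (a) If there exists A ⊆ X with ¬(π(A) ∼_κ ρ(A)), then there exists A ⊆ X of cardinality exactly κ with ¬(π(A) ∼_κ ρ(A)). (b) For every A ⊆ X such that |π(A) \ ρ(A)| ≥ κ, there exists Y ⊆ A with |Y| = κ and |π(Y) \ ρ(Y)| ≥ κ. -/
open Cardinal Set

universe u

/-- `A ∼_κ B`: the symmetric difference of `A` and `B` has cardinality `< κ`. -/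
def Sim {X : Type u} (κ : Cardinal.{u}) (A B : Set X) : Prop :=
  #(↥(symmDiff A B)) < κ

/-- `π : P(X) → P(X)` represents an automorphism of `P(X)/I_κ`. -/
def IsAutoRep {X : Type u} (κ : Cardinal.{u}) (π : Set X → Set X) : Prop :=
  (∀ A B : Set X, Sim κ A B → Sim κ (π A) (π B)) ∧
  (∀ A B : Set X, Sim κ (π (A ∪ B)) (π A ∪ π B)) ∧
  (∀ A : Set X, Sim κ (π Aᶜ) (π A)ᶜ) ∧
  (∀ B : Set X, ∃ A : Set X, Sim κ (π A) B) ∧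
  (∀ A B : Set X, Sim κ (π A) (π B) → Sim κ A B)

/-- `π` is trivial on `Z`: some `f : X → Z` has `π(A) ∼_κ f⁻¹(A)` for all `A ⊆ Z`. -/
def TrivialOn {X : Type u} (κ : Cardinal.{u}) (π : Set X → Set X) (Z : Set X) : Prop :=
  ∃ f : X → X, (∀ x, f x ∈ Z) ∧ ∀ A : Set X, A ⊆ Z → Sim κ (π A) (f ⁻¹' A)

/-- `π` is trivial: some `f : X → X` has `π(A) ∼_κ f⁻¹(A)` for all `A ⊆ X`. -/
def IsTrivial {X : Type u} (κ : Cardinal.{u}) (π : Set X → Set X) : Prop :=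
  ∃ f : X → X, ∀ A : Set X, Sim κ (π A) (f ⁻¹' A)

/-- `π` is cardinality-preserving. -/
def CardPres {X : Type u} (κ : Cardinal.{u}) (π : Set X → Set X) : Prop :=
  ∀ A : Set X, ∃ B : Set X, #(↥B) = #(↥A) ∧ Sim κ (π A) B

section Aux

variable {X : Type u} {κ : Cardinal.{u}}

lemma small_mono {A B : Set X} (h : A ⊆ B) (hB : #(↥B) < κ) : #(↥A) < κ :=
  (Cardinal.mk_le_mk_of_subset h).trans_lt hB

lemma setSmall_union (hκ : ℵ₀ ≤ κ) {A B : Set X} (hA : #(↥A) < κ) (hB : #(↥B) < κ) :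
    #(↥(A ∪ B)) < κ :=
  (Cardinal.mk_union_le A B).trans_lt (Cardinal.add_lt_of_lt hκ hA hB)

lemma symmDiff_empty' (A : Set X) : symmDiff A (∅ : Set X) = A := by
  rw [Set.symmDiff_def]
  simp

lemma sim_refl (hκ : ℵ₀ ≤ κ) (A : Set X) : Sim κ A A := by
  unfold Sim
  rw [symmDiff_self]
  simp only [Set.bot_eq_empty, Cardinal.mk_eq_zero]
  exact lt_of_lt_of_le (by exact_mod_cast Cardinal.aleph0_pos) hκ

lemma sim_symm {A B : Set X} (h : Sim κ A B) : Sim κ B A := by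
  unfold Sim at *
  rwa [symmDiff_comm]

lemma sim_trans (hκ : ℵ₀ ≤ κ) {A B C : Set X} (h1 : Sim κ A B) (h2 : Sim κ B C) :
    Sim κ A C :=
  small_mono (symmDiff_triangle A B C) (setSmall_union hκ h1 h2)

lemma sim_compl {A B : Set X} (h : Sim κ A B) : Sim κ Aᶜ Bᶜ := by
  unfold Sim at *
  rwa [compl_symmDiff_compl]

lemma sim_union_congr (hκ : ℵ₀ ≤ κ) {A B C D : Set X} (h1 : Sim κ A B) (h2 : Sim κ C D) :
    Sim κ (A ∪ C) (B ∪ D) := by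
  refine small_mono ?_ (setSmall_union hκ h1 h2)
  intro x hx
  simp only [Set.mem_symmDiff, Set.mem_union] at hx ⊢
  tauto

lemma sim_inter (hκ : ℵ₀ ≤ κ) {π : Set X → Set X} (hπ : IsAutoRep κ π) (A B : Set X) :
    Sim κ (π (A ∩ B)) (π A ∩ π B) := by
  obtain ⟨h1, h2, h3, h4, h5⟩ := hπ
  have e : A ∩ B = (Aᶜ ∪ Bᶜ)ᶜ := by rw [Set.compl_union, compl_compl, compl_compl]
  have s1 : Sim κ (π (A ∩ B)) (π (Aᶜ ∪ Bᶜ))ᶜ := by rw [e]; exact h3 _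
  have s2 : Sim κ (π (Aᶜ ∪ Bᶜ))ᶜ (π Aᶜ ∪ π Bᶜ)ᶜ := sim_compl (h2 _ _)
  have s3 : Sim κ (π Aᶜ ∪ π Bᶜ)ᶜ ((π A)ᶜ ∪ (π B)ᶜ)ᶜ :=
    sim_compl (sim_union_congr hκ (h3 A) (h3 B))
  have e2 : ((π A)ᶜ ∪ (π B)ᶜ)ᶜ = π A ∩ π B := by
    rw [Set.compl_union, compl_compl, compl_compl]
  rw [e2] at s3
  exact sim_trans hκ (sim_trans hκ s1 s2) s3

/-- If `A ⊆ B` then `π A \ π B` is small. -/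
lemma small_image_diff (hκ : ℵ₀ ≤ κ) {π : Set X → Set X} (hπ : IsAutoRep κ π)
    {A B : Set X} (hsub : A ⊆ B) : #(↥(π A \ π B)) < κ := by
  have h := sim_inter hκ hπ A B
  rw [Set.inter_eq_self_of_subset_left hsub] at h
  refine small_mono ?_ h
  intro x hx
  rw [Set.mem_symmDiff]
  exact Or.inl ⟨hx.1, fun hx2 => hx.2 hx2.2⟩

lemma small_pi_empty (hκ : ℵ₀ ≤ κ) {π : Set X → Set X} (hπ : IsAutoRep κ π) :
    #(↥(π (∅ : Set X))) < κ := by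
  obtain ⟨h1, h2, h3, h4, h5⟩ := hπ
  have su : Sim κ (π (Set.univ : Set X)) (π (∅ : Set X) ∪ π (∅ : Set X)ᶜ) := by
    have := h2 (∅ : Set X) (∅ : Set X)ᶜ
    rwa [Set.union_compl_self] at this
  have su2 : Sim κ (π (∅ : Set X) ∪ π (∅ : Set X)ᶜ) (π (∅ : Set X) ∪ (π (∅ : Set X))ᶜ) :=
    sim_union_congr hκ (sim_refl hκ _) (h3 ∅)
  have su3 : Sim κ (π (Set.univ : Set X)) (Set.univ : Set X) := by
    have := sim_trans hκ su su2
    rwa [Set.union_compl_self] at this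
  have se : Sim κ (π (∅ : Set X)) (π (Set.univ : Set X))ᶜ := by
    have := h3 (Set.univ : Set X)
    rwa [Set.compl_univ] at this
  have se2 : Sim κ (π (Set.univ : Set X))ᶜ (∅ : Set X) := by
    have := sim_compl su3
    rwa [Set.compl_univ] at this
  have := sim_trans hκ se se2
  unfold Sim at this
  rwa [symmDiff_empty'] at this

/-- If `Sim κ P Q` and `κ ≤ #Q` then `κ ≤ #P`. -/
lemma large_of_sim (hκ : ℵ₀ ≤ κ) {P Q : Set X} (h : Sim κ P Q) (hQ : κ ≤ #(↥Q)) :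
    κ ≤ #(↥P) := by
  by_contra hc
  push_neg at hc
  have hsub : Q ⊆ P ∪ symmDiff P Q := by
    intro x hx
    by_cases hxP : x ∈ P
    · exact Or.inl hxP
    · exact Or.inr (Set.mem_symmDiff.mpr (Or.inr ⟨hx, hxP⟩))
  exact absurd (hQ.trans (Cardinal.mk_le_mk_of_subset hsub))
    (not_le.mpr (setSmall_union hκ hc h))

lemma small_of_sim (hκ : ℵ₀ ≤ κ) {P Q : Set X} (h : Sim κ P Q) (hQ : #(↥Q) < κ) :
    #(↥P) < κ := by
  by_contra hc
  push_neg at hc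
  exact absurd (large_of_sim hκ (sim_symm h) hc) (not_le.mpr hQ)

/-- Images of large sets are large. -/
lemma large_image (hκ : ℵ₀ ≤ κ) {π : Set X → Set X} (hπ : IsAutoRep κ π)
    {Y : Set X} (hY : κ ≤ #(↥Y)) : κ ≤ #(↥(π Y)) := by
  have hns : ¬ Sim κ Y (∅ : Set X) := by
    unfold Sim
    rw [symmDiff_empty']
    exact not_lt.mpr hY
  have hns2 : ¬ Sim κ (π Y) (π (∅ : Set X)) := fun h => hns (hπ.2.2.2.2 _ _ h)
  unfold Sim at hns2
  push_neg at hns2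
  by_contra hc
  push_neg at hc
  have hsub : symmDiff (π Y) (π (∅ : Set X)) ⊆ π Y ∪ π (∅ : Set X) := by
    intro x hx
    rw [Set.mem_symmDiff] at hx
    rcases hx with ⟨h, _⟩ | ⟨h, _⟩
    · exact Or.inl h
    · exact Or.inr h
  exact absurd (hns2.trans (Cardinal.mk_le_mk_of_subset hsub))
    (not_le.mpr (setSmall_union hκ hc (small_pi_empty hκ hπ)))

/-- Part (b) as a standalone lemma. -/
lemma partB (hκ : ℵ₀ ≤ κ) {π ρ : Set X → Set X}
    (hπ : IsAutoRep κ π) (hρ : IsAutoRep κ ρ) (A : Set X)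
    (hA : κ ≤ #(↥(π A \ ρ A))) :
    ∃ Y : Set X, Y ⊆ A ∧ #(↥Y) = κ ∧ κ ≤ #(↥(π Y \ ρ Y)) := by
  -- choose S' ⊆ π A \ ρ A of size κ
  obtain ⟨S', hS'sub, hS'card⟩ := Cardinal.le_mk_iff_exists_subset.mp hA
  -- choose B with π B ∼ S'
  obtain ⟨B, hB⟩ := hπ.2.2.2.1 S'
  set Y₀ := A ∩ B with hY₀def
  -- π Y₀ ∼ S'
  have hπY₀ : Sim κ (π Y₀) S' := by
    have h1 : Sim κ (π Y₀) (π A ∩ π B) := sim_inter hκ hπ A B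
    have h2 : Sim κ (π A ∩ π B) (π A ∩ S') := by
      refine small_mono ?_ hB
      intro x hx
      rw [Set.mem_symmDiff] at hx ⊢
      rcases hx with ⟨⟨_, hb⟩, hns⟩ | ⟨⟨_, hs⟩, hnb⟩
      · exact Or.inl ⟨hb, fun h => hns ⟨‹_›, h⟩⟩
      · exact Or.inr ⟨hs, fun h => hnb ⟨‹_›, h⟩⟩
    have e : π A ∩ S' = S' :=
      Set.inter_eq_self_of_subset_right (hS'sub.trans Set.diff_subset)
    rw [e] at h2
    exact sim_trans hκ h1 h2
  -- κ ≤ #Y₀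
  have hY₀large : κ ≤ #(↥Y₀) := by
    by_contra hc
    push_neg at hc
    have hsim : Sim κ Y₀ (∅ : Set X) := by
      unfold Sim; rwa [symmDiff_empty']
    have : Sim κ (π Y₀) (π (∅ : Set X)) := hπ.1 _ _ hsim
    have hsmall : #(↥(π Y₀)) < κ := by
      by_contra hc2
      push_neg at hc2
      have hsub : π Y₀ ⊆ π (∅ : Set X) ∪ symmDiff (π Y₀) (π (∅ : Set X)) := by
        intro x hx
        by_cases hxe : x ∈ π (∅ : Set X)
        · exact Or.inl hxe
        · exact Or.inr (Set.mem_symmDiff.mpr (Or.inl ⟨hx, hxe⟩))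
      exact absurd (hc2.trans (Cardinal.mk_le_mk_of_subset hsub))
        (not_le.mpr (setSmall_union hκ (small_pi_empty hκ hπ) this))
    have : κ ≤ #(↥(π Y₀)) :=
      large_of_sim hκ hπY₀ (le_of_eq hS'card.symm)
    exact absurd this (not_le.mpr hsmall)
  -- choose Y ⊆ Y₀ of size exactly κ
  obtain ⟨Y, hYsub, hYcard⟩ := Cardinal.le_mk_iff_exists_subset.mp hY₀large
  refine ⟨Y, hYsub.trans Set.inter_subset_left, hYcard, ?_⟩
  -- the small exceptional sets
  have s1 : #(↥(π Y \ π Y₀)) < κ := small_image_diff hκ hπ hYsub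
  have s2 : #(↥(symmDiff (π Y₀) S')) < κ := hπY₀
  have s3 : #(↥(ρ Y \ ρ A)) < κ :=
    small_image_diff hκ hρ (hYsub.trans Set.inter_subset_left)
  have hπYlarge : κ ≤ #(↥(π Y)) := large_image hκ hπ (le_of_eq hYcard.symm)
  by_contra hc
  push_neg at hc
  have hsub : π Y ⊆ ((π Y \ ρ Y) ∪ (π Y \ π Y₀)) ∪ (symmDiff (π Y₀) S' ∪ (ρ Y \ ρ A)) := by
    intro x hx
    by_cases h1 : x ∈ ρ Y
    · by_cases h2 : x ∈ π Y₀
      · by_cases h3 : x ∈ S'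
        · have : x ∉ ρ A := (hS'sub h3).2
          exact Or.inr (Or.inr ⟨h1, this⟩)
        · exact Or.inr (Or.inl (Set.mem_symmDiff.mpr (Or.inl ⟨h2, h3⟩)))
      · exact Or.inl (Or.inr ⟨hx, h2⟩)
    · exact Or.inl (Or.inl ⟨hx, h1⟩)
  exact absurd (hπYlarge.trans (Cardinal.mk_le_mk_of_subset hsub))
    (not_le.mpr (setSmall_union hκ (setSmall_union hκ hc s1) (setSmall_union hκ s2 s3)))

end Aux

/-- Automorphisms of `P(X)/I_κ` are determined by their action on sets of cardinality `κ`. -/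
theorem stmt2 {X : Type u} (κ lam : Cardinal.{u}) (hκ : ℵ₀ ≤ κ)
    (hkl : κ ≤ lam) (hX : #X = lam)
    (π ρ : Set X → Set X) (hπ : IsAutoRep κ π) (hρ : IsAutoRep κ ρ) :
    ((∃ A : Set X, ¬ Sim κ (π A) (ρ A)) →
      ∃ A : Set X, #(↥A) = κ ∧ ¬ Sim κ (π A) (ρ A)) ∧
    (∀ A : Set X, κ ≤ #(↥(π A \ ρ A)) →
      ∃ Y : Set X, Y ⊆ A ∧ #(↥Y) = κ ∧ κ ≤ #(↥(π Y \ ρ Y))) := by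
  constructor
  · rintro ⟨A, hA⟩
    unfold Sim at hA
    push_neg at hA
    have hdec : symmDiff (π A) (ρ A) = (π A \ ρ A) ∪ (ρ A \ π A) := by
      rw [Set.symmDiff_def]
    by_cases h1 : κ ≤ #(↥(π A \ ρ A))
    · obtain ⟨Y, _, hYcard, hYlarge⟩ := partB hκ hπ hρ A h1
      refine ⟨Y, hYcard, ?_⟩
      intro hsim
      unfold Sim at hsim
      have : π Y \ ρ Y ⊆ symmDiff (π Y) (ρ Y) := by
        intro x hx
        exact Set.mem_symmDiff.mpr (Or.inl ⟨hx.1, hx.2⟩)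
      exact absurd (hYlarge.trans (Cardinal.mk_le_mk_of_subset this)) (not_le.mpr hsim)
    · push_neg at h1
      have h2 : κ ≤ #(↥(ρ A \ π A)) := by
        by_contra hc
        push_neg at hc
        have : #(↥(symmDiff (π A) (ρ A))) < κ := by
          rw [hdec]
          exact setSmall_union hκ h1 hc
        exact absurd hA (not_le.mpr this)
      obtain ⟨Y, _, hYcard, hYlarge⟩ := partB hκ hρ hπ A h2
      refine ⟨Y, hYcard, ?_⟩
      intro hsim
      unfold Sim at hsim
      have : ρ Y \ π Y ⊆ symmDiff (π Y) (ρ Y) := by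
        intro x hx
        exact Set.mem_symmDiff.mpr (Or.inr ⟨hx.1, hx.2⟩)
      exact absurd (hYlarge.trans (Cardinal.mk_le_mk_of_subset this)) (not_le.mpr hsim)
  · intro A hA
    exact partB hκ hπ hρ A hA
end

section
/- Let κ ≤ λ be infinite cardinals with κ uncountable, let X be a set of cardinality λ, and let π represent a cardinality-preserving automorphism of P(X)/I_κ. Then for every A ⊆ X there exists B ⊆ X with A ⊆ B, |B| = |A|, and π(B) ∼_κ B. -/
open Cardinal Set

universe u

/-!
Sets of size `< κ` are fixed points because `π` maps `κ`-small sets to `κ`-small sets.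
For a larger `A`, choose a regular `c < κ` with `c ≠ cf κ` (`ℵ₀`, or `ℵ₁` when `cf κ = ℵ₀`):
then the union of an increasing `c`-chain of `κ`-small sets is `κ`-small. Close `A` off along
such a chain, adding at each step a set `C Y` of size `|Y|` with `π Y ∼ C Y` and some `D Y`
with `π (D Y) ∼ Y`; the union `B` has size `|A|`. Each stage lies inside `π B` up to a
`κ`-small set, hence so does `B`. Conversely, if `π D ∼ π B \ B`, then `D` meets every stage,
and the complement of `B`, in `κ`-small sets, so `D`, and with it `π B \ B`, is `κ`-small.
-/

section

variable {X : Type u} {κ : Cardinal.{u}}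

def AlmostSubset (κ : Cardinal.{u}) (s t : Set X) : Prop :=
  #↥(s \ t) < κ

namespace AlmostSubset

variable {s s' t t' r : Set X}

theorem mono (hs : s' ⊆ s) (ht : t ⊆ t') (h : AlmostSubset κ s t) : AlmostSubset κ s' t' :=
  (mk_le_mk_of_subset (sdiff_subset_sdiff hs ht)).trans_lt h

theorem trans (hκ : ℵ₀ ≤ κ) (h₁ : AlmostSubset κ s t) (h₂ : AlmostSubset κ t r) :
    AlmostSubset κ s r :=
  (mk_le_mk_of_subset (sdiff_triangle s t r)).trans_lt <|
    (mk_union_le _ _).trans_lt (add_lt_of_lt hκ h₁ h₂)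

theorem inter (hκ : ℵ₀ ≤ κ) (h₁ : AlmostSubset κ s t) (h₂ : AlmostSubset κ s r) :
    AlmostSubset κ s (t ∩ r) := by
  rw [AlmostSubset, sdiff_inter]
  exact (mk_union_le _ _).trans_lt (add_lt_of_lt hκ h₁ h₂)

theorem mk_lt (hκ : ℵ₀ ≤ κ) (h : AlmostSubset κ s t) (ht : #t < κ) : #s < κ :=
  (mk_le_mk_of_subset (subset_sdiff_union s t)).trans_lt <|
    (mk_union_le _ _).trans_lt (add_lt_of_lt hκ h ht)

theorem of_subset (hκ : 0 < κ) (h : s ⊆ t) : AlmostSubset κ s t := by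
  rwa [AlmostSubset, sdiff_eq_empty.2 h, mk_eq_zero]

theorem mk_lt_of_compl (hκ : ℵ₀ ≤ κ) (h₁ : AlmostSubset κ s t)
    (h₂ : AlmostSubset κ s tᶜ) : #s < κ :=
  (h₁.inter hκ h₂).mk_lt hκ (by simp [hκ.trans_lt' aleph0_pos])

end AlmostSubset

namespace Sim

variable {s t r : Set X}

theorem almostSubset (h : Sim κ s t) : AlmostSubset κ s t :=
  (mk_le_mk_of_subset le_sup_left).trans_lt h

theorem symm (h : Sim κ s t) : Sim κ t s := by
  rwa [Sim, symmDiff_comm]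

theorem almostSubset_symm (h : Sim κ s t) : AlmostSubset κ t s :=
  h.symm.almostSubset

theorem trans (hκ : ℵ₀ ≤ κ) (h₁ : Sim κ s t) (h₂ : Sim κ t r) : Sim κ s r :=
  (mk_le_mk_of_subset (symmDiff_triangle s t r)).trans_lt <|
    (mk_union_le _ _).trans_lt (add_lt_of_lt hκ h₁ h₂)

theorem of_almostSubset (hκ : ℵ₀ ≤ κ) (h₁ : AlmostSubset κ s t)
    (h₂ : AlmostSubset κ t s) : Sim κ s t :=
  (mk_union_le _ _).trans_lt (add_lt_of_lt hκ h₁ h₂)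

theorem of_mk_lt (hκ : ℵ₀ ≤ κ) (hs : #s < κ) (ht : #t < κ) : Sim κ s t :=
  .of_almostSubset hκ ((mk_le_mk_of_subset sdiff_subset).trans_lt hs)
    ((mk_le_mk_of_subset sdiff_subset).trans_lt ht)

theorem mk_le {c : Cardinal.{u}} (h : Sim κ s t) (hc : ℵ₀ ≤ c) (hκc : κ ≤ c)
    (hs : #s ≤ c) : #t ≤ c :=
  (mk_le_mk_of_subset (le_symmDiff_sup_left s t)).trans <|
    (mk_union_le _ _).trans (add_le_of_le hc (h.le.trans hκc) hs)

end Sim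

namespace IsAutoRep

variable {π : Set X → Set X} {A B : Set X}

theorem almostSubset_of_subset (hπ : IsAutoRep κ π) (h : A ⊆ B) :
    AlmostSubset κ (π A) (π B) := by
  have := (hπ.2.1 A B).almostSubset_symm
  rw [union_eq_right.2 h] at this
  exact this.mono subset_union_left subset_rfl

theorem almostSubset_compl (hπ : IsAutoRep κ π) (A : Set X) :
    AlmostSubset κ (π Aᶜ) (π A)ᶜ :=
  (hπ.2.2.1 A).almostSubset

theorem mk_image_empty_lt (hκ : ℵ₀ ≤ κ) (hπ : IsAutoRep κ π) : #(π ∅) < κ := by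
  refine AlmostSubset.mk_lt_of_compl hκ (hπ.almostSubset_of_subset (empty_subset univ)) ?_
  simpa using hπ.almostSubset_compl univ

theorem almostSubset_of_image (hκ : ℵ₀ ≤ κ) (hπ : IsAutoRep κ π)
    (h : AlmostSubset κ (π A) (π B)) : AlmostSubset κ A B := by
  have hB : Sim κ (π (A ∪ B)) (π B) := by
    refine (hπ.2.1 A B).trans hκ (.of_almostSubset hκ ?_ ?_)
    · rwa [AlmostSubset, union_sdiff_right]
    · exact .of_subset (aleph0_pos.trans_le hκ) subset_union_right
  exact ((hπ.2.2.2.2 _ _ hB).almostSubset).mono subset_union_left subset_rfl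

theorem mk_lt_of_image (hκ : ℵ₀ ≤ κ) (hπ : IsAutoRep κ π) (h : #(π A) < κ) :
    #A < κ := by
  simpa [AlmostSubset] using
    hπ.almostSubset_of_image hκ (B := ∅) ((mk_le_mk_of_subset sdiff_subset).trans_lt h)

theorem mk_image_lt (hκ : ℵ₀ ≤ κ) (hπ : IsAutoRep κ π) (h : #A < κ) : #(π A) < κ :=
  (hπ.1 _ _ (.of_mk_lt hκ h (by simpa using hκ.trans_lt' aleph0_pos))).almostSubset.mk_lt hκ
    (hπ.mk_image_empty_lt hκ)

end IsAutoRep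

section ClosureChain

variable {W : Type u} [LinearOrder W] [WellFoundedLT W] (g : Set X → Set X) (A : Set X)

noncomputable def closureChain : W → Set X :=
  wellFounded_lt.fix fun w ih => A ∪ ⋃ v : Iio w, g (ih v v.2)

theorem closureChain_eq (w : W) :
    closureChain g A w = A ∪ ⋃ v : Iio w, g (closureChain g A (v : W)) :=
  wellFounded_lt.fix_eq _ w

theorem subset_closureChain (w : W) : A ⊆ closureChain g A w := by
  rw [closureChain_eq]
  exact subset_union_left

theorem image_closureChain_subset {v w : W} (h : v < w) :
    g (closureChain g A v) ⊆ closureChain g A w := by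
  rw [closureChain_eq g A w]
  exact (subset_iUnion (fun u : Iio w => g (closureChain g A (u : W))) ⟨v, h⟩).trans
    subset_union_right

theorem closureChain_mono : Monotone (closureChain g A : W → Set X) := by
  intro v w h
  rw [closureChain_eq, closureChain_eq g A w]
  exact union_subset_union_right _ <| iUnion_subset fun u =>
    subset_iUnion_of_subset (⟨u, u.2.trans_le h⟩ : Iio w) subset_rfl

theorem mk_closureChain_le {c : Cardinal.{u}} (hc : ℵ₀ ≤ c) (hA : #A ≤ c) (hW : #W ≤ c)
    (hg : ∀ Y : Set X, #Y ≤ c → #(g Y) ≤ c) (w : W) : #(closureChain g A w) ≤ c := by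
  induction w using WellFoundedLT.induction with
  | ind w ih =>
    rw [closureChain_eq]
    refine (mk_union_le _ _).trans (add_le_of_le hc hA ?_)
    refine (mk_iUnion_le _).trans (mul_le_of_le hc ((mk_subtype_le _).trans hW) ?_)
    exact ciSup_le' fun v => hg _ (ih v v.2)

theorem mk_iUnion_closureChain_le {c : Cardinal.{u}} (hc : ℵ₀ ≤ c) (hA : #A ≤ c) (hW : #W ≤ c)
    (hg : ∀ Y : Set X, #Y ≤ c → #(g Y) ≤ c) : #(⋃ w : W, closureChain g A w) ≤ c :=
  (mk_iUnion_le _).trans <| mul_le_of_le hc hW <|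
    ciSup_le' (mk_closureChain_le g A hc hA hW hg)

end ClosureChain

theorem mk_iUnion_lt_of_lt_cof {W : Type u} {E : W → Set X} (hκ : ℵ₀ ≤ κ)
    (hW : #W < κ.ord.cof) (hE : ∀ w, #(E w) < κ) : #(⋃ w, E w) < κ :=
  (mk_iUnion_le E).trans_lt <| mul_lt_of_lt hκ (hW.trans_le (Ordinal.cof_ord_le κ))
    (iSup_lt_of_lt_cof_ord hW hE)

theorem mk_iUnion_lt_of_cof_lt_cof {W : Type u} [LinearOrder W] {E : W → Set X}
    (hκ : ℵ₀ ≤ κ) (hW : #W < κ) (hcof : κ.ord.cof < Order.cof W) (hmono : Monotone E)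
    (hE : ∀ w, #(E w) < κ) : #(⋃ w, E w) < κ := by
  obtain ⟨s, hs, hs_card⟩ := Order.exists_cof_eq κ.ord.ToType
  rw [Ordinal.cof_toType] at hs_card
  -- The sets `V x` are downward closed and cover `W`; there are fewer than `cof W` of them,
  -- so one is cofinal, i.e. all of `W`.
  let V : s → Set W := fun x => {w | #(E w) ≤ (x.1 : Ordinal).card}
  have hV : IsCofinal (⋃₀ range V) := by
    suffices h : ⋃ x, V x = Set.univ by rw [sUnion_range, h]; exact .univ
    refine eq_univ_of_forall fun w => ?_
    obtain ⟨x, hx, hle⟩ := hs (Ordinal.ToType.mk ⟨(#(E w)).ord, ord_lt_ord.2 (hE w)⟩)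
    refine mem_iUnion.2 ⟨⟨x, hx⟩, ?_⟩
    simp only [V, mem_ofPred_eq, ← ord_le]
    simpa [← Subtype.coe_le_coe] using Ordinal.ToType.mk.symm.monotone hle
  obtain ⟨_, ⟨x, rfl⟩, hx⟩ := isCofinal_of_isCofinal_sUnion hV
    (mk_range_le.trans_lt (hs_card.trans_lt hcof))
  have hsup : ⨆ w, #(E w) ≤ (x.1 : Ordinal).card := by
    refine ciSup_le' fun w => ?_
    obtain ⟨w', hw', hww'⟩ := hx w
    exact (mk_le_mk_of_subset (hmono hww')).trans hw'
  exact (mk_iUnion_le E).trans_lt <| mul_lt_of_lt hκ hW <|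
    hsup.trans_lt (lt_ord.1 (x.1 : Iio κ.ord).2)

theorem mk_iUnion_lt_of_isRegular {c : Cardinal.{u}} (hc : c.IsRegular) (hcκ : c < κ)
    (hc_cof : c ≠ κ.ord.cof) {E : c.ord.ToType → Set X} (hmono : Monotone E)
    (hE : ∀ w, #(E w) < κ) : #(⋃ w, E w) < κ := by
  have hκ : ℵ₀ ≤ κ := hc.aleph0_le.trans hcκ.le
  have hW : #c.ord.ToType = c := by simp
  rcases hc_cof.lt_or_gt with h | h
  · exact mk_iUnion_lt_of_lt_cof hκ (hW.trans_lt h) hE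
  · exact mk_iUnion_lt_of_cof_lt_cof hκ (hW.trans_lt hcκ)
      (by rwa [Ordinal.cof_toType, hc.cof_ord]) hmono hE

theorem exists_isRegular_lt_ne_cof (hκ : ℵ₀ < κ) :
    ∃ c : Cardinal.{u}, c.IsRegular ∧ c < κ ∧ c ≠ κ.ord.cof := by
  by_cases h : κ.ord.cof = ℵ₀
  · refine ⟨ℵ₁, isRegular_aleph_one, (aleph_one_le_iff.2 hκ).lt_of_ne ?_, ?_⟩
    · rintro rfl
      exact aleph0_lt_aleph_one.ne' (isRegular_aleph_one.cof_ord ▸ h)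
    · exact h ▸ aleph0_lt_aleph_one.ne'
  · exact ⟨ℵ₀, isRegular_aleph0, hκ, Ne.symm h⟩

namespace IsAutoRep

variable {π : Set X → Set X}

theorem sim_iUnion (hκ : ℵ₀ ≤ κ) (hπ : IsAutoRep κ π) {W : Type u} [Preorder W]
    (hU : ∀ F : W → Set X, Monotone F → (∀ w, #(F w) < κ) → #(⋃ w, F w) < κ)
    {E : W → Set X} (hmono : Monotone E)
    (hforward : ∀ w, AlmostSubset κ (π (E w)) (⋃ v, E v))
    (hbackward : ∀ w, ∃ Z ⊆ ⋃ v, E v, AlmostSubset κ (E w) (π Z)) :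
    Sim κ (π (⋃ w, E w)) (⋃ w, E w) := by
  set B := ⋃ w, E w
  have hB_sub : AlmostSubset κ B (π B) := by
    have := hU (fun w => E w \ π B) (fun v w h => sdiff_subset_sdiff_left (hmono h)) fun w =>
      let ⟨_, hZ, hwZ⟩ := hbackward w
      hwZ.trans hκ (hπ.almostSubset_of_subset hZ)
    rwa [← iUnion_sdiff] at this
  obtain ⟨D, hD⟩ := hπ.2.2.2.1 (π B \ B)
  have hD_sub (Z : Set X) (hZ : Z ⊆ D) : AlmostSubset κ (π Z) (π B \ B) :=
    (hπ.almostSubset_of_subset hZ).trans hκ hD.almostSubset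
  have hout : #↥(D \ B) < κ := hπ.mk_lt_of_image hκ <| AlmostSubset.mk_lt_of_compl hκ
    ((hD_sub _ sdiff_subset).mono subset_rfl sdiff_subset)
    ((hπ.almostSubset_of_subset fun x hx => hx.2).trans hκ (hπ.almostSubset_compl B))
  have hin : #↥(D ∩ B) < κ := by
    rw [inter_iUnion]
    refine hU _ (fun v w h => inter_subset_inter_right _ (hmono h)) fun w =>
      hπ.mk_lt_of_image hκ <| AlmostSubset.mk_lt_of_compl hκ (t := B)
        ((hπ.almostSubset_of_subset inter_subset_right).trans hκ (hforward w))
        ((hD_sub _ inter_subset_left).mono subset_rfl fun x hx => hx.2)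
  have hD_small : #D < κ := by
    rw [← inter_union_sdiff D B]
    exact (mk_union_le _ _).trans_lt (add_lt_of_lt hκ hin hout)
  exact .of_almostSubset hκ (hD.almostSubset_symm.mk_lt hκ (hπ.mk_image_lt hκ hD_small)) hB_sub

theorem exists_superset_sim_of_chain (hκ : ℵ₀ ≤ κ) (hπ : IsAutoRep κ π) (hcp : CardPres κ π)
    {A : Set X} (hA : κ ≤ #A) {W : Type u} [LinearOrder W] [WellFoundedLT W] [Nonempty W]
    [NoMaxOrder W] (hW : #W < κ)
    (hU : ∀ F : W → Set X, Monotone F → (∀ w, #(F w) < κ) → #(⋃ w, F w) < κ) :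
    ∃ B, A ⊆ B ∧ #B = #A ∧ Sim κ (π B) B := by
  choose C hC_card hC using hcp
  choose D hD using hπ.2.2.2.1
  have hA₀ : ℵ₀ ≤ #A := hκ.trans hA
  have hg (Y : Set X) (hY : #Y ≤ #A) : #↥(C Y ∪ D Y) ≤ #A :=
    (mk_union_le _ _).trans <| add_le_of_le hA₀ ((hC_card Y).trans_le hY) <|
      (hC_card (D Y)).symm.trans_le (((hD Y).symm.trans hκ (hC (D Y))).mk_le hA₀ hA hY)
  let E : W → Set X := closureChain (fun Y => C Y ∪ D Y) A
  have hstep (w : W) : C (E w) ∪ D (E w) ⊆ ⋃ v, E v :=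
    let ⟨_, hw⟩ := exists_gt w
    (image_closureChain_subset _ A hw).trans (subset_iUnion E _)
  have hAB : A ⊆ ⋃ w, E w :=
    (subset_closureChain _ A (Classical.arbitrary W)).trans (subset_iUnion E _)
  have hcard : #↥(⋃ w, E w) = #A :=
    (mk_iUnion_closureChain_le _ A hA₀ le_rfl (hW.le.trans hA) hg).antisymm
      (mk_le_mk_of_subset hAB)
  refine ⟨_, hAB, hcard, hπ.sim_iUnion hκ hU (closureChain_mono _ A) (fun w => ?_) fun w => ?_⟩
  · exact (hC (E w)).almostSubset.mono subset_rfl (subset_union_left.trans (hstep w))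
  · exact ⟨D (E w), subset_union_right.trans (hstep w), (hD (E w)).almostSubset_symm⟩

end IsAutoRep

end

theorem stmt18_general {X : Type u} (κ : Cardinal.{u}) (hκ : ℵ₀ < κ)
    (π : Set X → Set X) (hπ : IsAutoRep κ π) (hcp : CardPres κ π) :
    ∀ A : Set X, ∃ B : Set X, A ⊆ B ∧ #(↥B) = #(↥A) ∧ Sim κ (π B) B := by
  intro A
  rcases lt_or_ge #A κ with hA | hA
  · exact ⟨A, subset_rfl, rfl, .of_mk_lt hκ.le (hπ.mk_image_lt hκ.le hA) hA⟩
  obtain ⟨c, hc, hcκ, hc_cof⟩ := exists_isRegular_lt_ne_cof hκ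
  have : NoMaxOrder c.ord.ToType := Cardinal.noMaxOrder hc.aleph0_le
  have : Nonempty c.ord.ToType := by simpa using hc.ne_zero
  exact hπ.exists_superset_sim_of_chain hκ.le hcp hA (by simpa using hcκ)
    fun _ => mk_iUnion_lt_of_isRegular hc hcκ hc_cof

/-- For `κ` uncountable and `π` cardinality-preserving, every set is contained in a fixed
point of `π` of the same cardinality. -/
theorem stmt18 {X : Type u} (κ lam : Cardinal.{u}) (hκ : ℵ₀ < κ)
    (hkl : κ ≤ lam) (hX : #X = lam)
    (π : Set X → Set X) (hπ : IsAutoRep κ π) (hcp : CardPres κ π) :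
    ∀ A : Set X, ∃ B : Set X, A ⊆ B ∧ #(↥B) = #(↥A) ∧ Sim κ (π B) B :=
  stmt18_general κ hκ π hπ hcp
end
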